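/- For any f in the linear span of the Haar functions and any dyadic interval K, (f², h_K) = Σ_{I ⊊ K} (f,h_I)² h_K(I) + 2 (f,h_K) ⟨f⟩_K. -/

import Mathlib

open MeasureTheory Filter
open scoped ENNReal Classical Topology

noncomputable section

/-- The standard dyadic interval `[k·2^n, (k+1)·2^n)`. -/
def dyadic (n k : ℤ) : Set ℝ := Set.Ico ((k : ℝ) * 2 ^ n) (((k : ℝ) + 1) * 2 ^ n)

/-- The Haar function associated with `dyadic n k`:
`h_I = |I|^{-1/2} (1_{I_+} - 1_{I_-})`. -/
def haar (n k : ℤ) : ℝ → ℝ := fun x =>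
  (2 : ℝ) ^ (-(n : ℝ) / 2) *
    ((dyadic (n - 1) (2 * k + 1)).indicator 1 x - (dyadic (n - 1) (2 * k)).indicator 1 x)

/-- The constant value of `haar n k` on the dyadic subinterval `dyadic m j`
(its value at the left endpoint of that subinterval). -/
def haarVal (n k m j : ℤ) : ℝ := haar n k ((j : ℝ) * 2 ^ m)

/-- Haar coefficient `(f, h_I)`. -/
def innH (f : ℝ → ℝ) (n k : ℤ) : ℝ := ∫ x, f x * haar n k x

/-- Dyadic average `⟨f⟩_I = |I|⁻¹ ∫_I f`. -/
def avg (f : ℝ → ℝ) (n k : ℤ) : ℝ := (2 : ℝ) ^ (-n) * ∫ x in dyadic n k, f x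

/-- The linear span of the Haar functions. -/
def haarSpan : Submodule ℝ (ℝ → ℝ) :=
  Submodule.span ℝ (Set.range fun p : ℤ × ℤ => haar p.1 p.2)

end

/-! Write `f = ∑ c_Q h_Q` (a finite sum). A Haar function is constant on every strictly smaller
dyadic interval, so for `Q ≠ R` with `|Q| ≤ |R|` one has `h_Q h_R = ⟨h_R⟩_Q h_Q`, while
`h_Q² = |Q|⁻¹ 1_Q`. Together with `∫ h_Q = 0` this gives orthonormality, hence `c_Q = (f, h_Q)`,
and the triple products
`∫ h_Q h_R h_K = δ_{QR} ⟨h_K⟩_Q + δ_{QK} ⟨h_R⟩_K + δ_{RK} ⟨h_Q⟩_K`.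
Expanding `(f², h_K) = ∑ c_Q c_R ∫ h_Q h_R h_K` and using `⟨h_K⟩_Q = h_K(Q)` for `Q ⊊ K`
(and `0` otherwise) gives the identity. -/

open MeasureTheory Set

lemma mem_dyadic_iff {n k : ℤ} {x : ℝ} : x ∈ dyadic n k ↔ ⌊x / 2 ^ n⌋ = k := by
  rw [Int.floor_eq_iff, le_div_iff₀ (zpow_pos two_pos n), div_lt_iff₀ (zpow_pos two_pos n)]
  rfl

lemma floor_div_two_zpow_of_le {m n : ℤ} (h : m ≤ n) (x : ℝ) :
    ⌊x / 2 ^ n⌋ = ⌊x / 2 ^ m⌋ / 2 ^ (n - m).toNat := by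
  obtain ⟨d, rfl⟩ := Int.exists_add_of_le h
  rw [add_sub_cancel_left, Int.toNat_natCast, zpow_add₀ two_ne_zero, zpow_natCast, ← div_div]
  exact_mod_cast Int.floor_div_natCast (x / 2 ^ m) (2 ^ d)

lemma mem_dyadic_congr {m n j k : ℤ} (h : m ≤ n) {x y : ℝ} (hx : x ∈ dyadic m j)
    (hy : y ∈ dyadic m j) : x ∈ dyadic n k ↔ y ∈ dyadic n k := by
  simp only [mem_dyadic_iff] at hx hy ⊢
  rw [floor_div_two_zpow_of_le h, floor_div_two_zpow_of_le h y, hx, hy]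

lemma left_mem_dyadic (n k : ℤ) : (k : ℝ) * 2 ^ n ∈ dyadic n k :=
  ⟨le_rfl, mul_lt_mul_of_pos_right (lt_add_one _) (zpow_pos two_pos n)⟩

lemma measurableSet_dyadic (n k : ℤ) : MeasurableSet (dyadic n k) := measurableSet_Ico

lemma volume_dyadic (n k : ℤ) : volume (dyadic n k) = ENNReal.ofReal (2 ^ n) := by
  rw [dyadic, Real.volume_Ico]; ring_nf

lemma volume_real_dyadic (n k : ℤ) : volume.real (dyadic n k) = 2 ^ n := by
  rw [measureReal_def, volume_dyadic, ENNReal.toReal_ofReal (zpow_pos two_pos n).le]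

lemma dyadic_subset_or_disjoint {m n : ℤ} (h : m ≤ n) (j k : ℤ) :
    dyadic m j ⊆ dyadic n k ∨ Disjoint (dyadic m j) (dyadic n k) := by
  by_cases hl : (j : ℝ) * 2 ^ m ∈ dyadic n k
  · exact Or.inl fun x hx => (mem_dyadic_congr h (left_mem_dyadic m j) hx).1 hl
  · exact Or.inr <| disjoint_left.2 fun x hx hxK =>
      hl ((mem_dyadic_congr h (left_mem_dyadic m j) hx).2 hxK)

lemma le_of_dyadic_subset {m n j k : ℤ} (h : dyadic m j ⊆ dyadic n k) : m ≤ n := by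
  have := measure_mono (μ := volume) h
  rw [volume_dyadic, volume_dyadic, ENNReal.ofReal_le_ofReal_iff (zpow_pos two_pos n).le] at this
  exact (zpow_le_zpow_iff_right₀ one_lt_two).1 this

lemma eq_of_mem_dyadic {n j k : ℤ} {x : ℝ} (hj : x ∈ dyadic n j) (hk : x ∈ dyadic n k) :
    j = k := by
  rw [mem_dyadic_iff] at hj hk
  rw [← hj, hk]

lemma dyadic_ssubset_iff {m n j k : ℤ} :
    dyadic m j ⊂ dyadic n k ↔ m < n ∧ dyadic m j ⊆ dyadic n k := by
  refine ⟨fun h => ⟨(le_of_dyadic_subset h.subset).lt_of_ne ?_, h.subset⟩,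
    fun ⟨hlt, h⟩ => h.ssubset_of_not_subset fun h' => (le_of_dyadic_subset h').not_gt hlt⟩
  rintro rfl
  obtain rfl := eq_of_mem_dyadic (left_mem_dyadic m j) (h.subset (left_mem_dyadic m j))
  exact h.ne rfl

lemma mem_dyadic_iff_floor_half {n k : ℤ} {x : ℝ} :
    x ∈ dyadic n k ↔ ⌊x / 2 ^ (n - 1)⌋ / 2 = k := by
  rw [mem_dyadic_iff, floor_div_two_zpow_of_le (sub_one_lt n).le x, sub_sub_cancel,
    Int.toNat_one, pow_one]

lemma haar_eq_zero_of_notMem {n k : ℤ} {x : ℝ} (hx : x ∉ dyadic n k) : haar n k x = 0 := by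
  rw [mem_dyadic_iff_floor_half] at hx
  simp only [haar, indicator_apply, mem_dyadic_iff]
  split_ifs <;> first | omega | simp

lemma two_rpow_neg_half_sq (n : ℤ) : ((2 : ℝ) ^ (-(n : ℝ) / 2)) ^ 2 = 2 ^ (-n) := by
  rw [← Real.rpow_natCast, ← Real.rpow_mul zero_le_two, ← Real.rpow_intCast]
  push_cast
  ring_nf

lemma haar_sq (n k : ℤ) (x : ℝ) :
    haar n k x ^ 2 = (dyadic n k).indicator (fun _ => (2 : ℝ) ^ (-n)) x := by
  simp only [haar, mul_pow, two_rpow_neg_half_sq, indicator_apply, mem_dyadic_iff (n := n - 1),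
    mem_dyadic_iff_floor_half (n := n)]
  split_ifs <;> first | omega | simp

lemma abs_haar_le (n k : ℤ) (x : ℝ) : |haar n k x| ≤ 2 ^ (-(n : ℝ) / 2) := by
  refine abs_le_of_sq_le_sq ?_ (by positivity)
  rw [haar_sq, two_rpow_neg_half_sq]
  exact indicator_le_self' (fun _ _ => (zpow_pos two_pos _).le) x

lemma haar_eq_of_mem_dyadic {m j n k : ℤ} (h : m < n) {x y : ℝ} (hx : x ∈ dyadic m j)
    (hy : y ∈ dyadic m j) : haar n k x = haar n k y := by
  have h' : m ≤ n - 1 := Int.le_sub_one_of_lt h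
  simp only [haar, indicator_apply, Pi.one_apply, mem_dyadic_congr h' hx hy]

lemma haar_eq_haarVal {m j n k : ℤ} (h : m < n) {x : ℝ} (hx : x ∈ dyadic m j) :
    haar n k x = haarVal n k m j :=
  haar_eq_of_mem_dyadic h hx (left_mem_dyadic m j)

lemma measurable_haar (n k : ℤ) : Measurable (haar n k) :=
  ((measurable_const.indicator (measurableSet_dyadic _ _)).sub
    (measurable_const.indicator (measurableSet_dyadic _ _))).const_mul _

lemma integrable_indicator_one_dyadic (n k : ℤ) :
    Integrable ((dyadic n k).indicator (1 : ℝ → ℝ)) :=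
  (integrable_indicator_iff (measurableSet_dyadic n k)).2 <|
    integrableOn_const (by rw [volume_dyadic]; exact ENNReal.ofReal_ne_top)

lemma integrable_haar (n k : ℤ) : Integrable (haar n k) :=
  ((integrable_indicator_one_dyadic _ _).sub (integrable_indicator_one_dyadic _ _)).const_mul _

lemma integrable_mul_haar {g : ℝ → ℝ} (hg : Measurable g) {C : ℝ} (hC : ∀ x, |g x| ≤ C)
    (n k : ℤ) : Integrable (fun x => g x * haar n k x) :=
  (integrable_haar n k).bdd_mul hg.aestronglyMeasurable (c := C) (ae_of_all _ hC)

lemma integral_haar (n k : ℤ) : ∫ x, haar n k x = 0 := by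
  unfold haar
  rw [integral_const_mul, integral_sub (integrable_indicator_one_dyadic _ _)
    (integrable_indicator_one_dyadic _ _), integral_indicator_one (measurableSet_dyadic _ _),
    integral_indicator_one (measurableSet_dyadic _ _),
    volume_real_dyadic, volume_real_dyadic, sub_self, mul_zero]

lemma avg_eq_of_forall_mem {g : ℝ → ℝ} {v : ℝ} {n k : ℤ} (h : ∀ x ∈ dyadic n k, g x = v) :
    avg g n k = v := by
  rw [avg, setIntegral_congr_fun (measurableSet_dyadic n k) h, setIntegral_const,
    volume_real_dyadic, smul_eq_mul, ← mul_assoc, ← zpow_add₀ two_ne_zero, neg_add_cancel,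
    zpow_zero, one_mul]

lemma avg_haar_of_le {m j n k : ℤ} (h : m ≤ n) : avg (haar m j) n k = 0 := by
  rcases dyadic_subset_or_disjoint h j k with hsub | hdisj
  · rw [avg, setIntegral_eq_integral_of_forall_compl_eq_zero
      fun x hx => haar_eq_zero_of_notMem fun hx' => hx (hsub hx'), integral_haar, mul_zero]
  · exact avg_eq_of_forall_mem fun x hx => haar_eq_zero_of_notMem (disjoint_right.1 hdisj hx)

lemma avg_haar_eq_ite (n k m j : ℤ) :
    avg (haar n k) m j = if dyadic m j ⊂ dyadic n k then haarVal n k m j else 0 := by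
  split_ifs with hsub
  · obtain ⟨hlt, -⟩ := dyadic_ssubset_iff.1 hsub
    exact avg_eq_of_forall_mem fun x hx => haar_eq_haarVal hlt hx
  rcases le_or_gt n m with hle | hlt
  · exact avg_haar_of_le hle
  rcases dyadic_subset_or_disjoint hlt.le j k with hsub' | hdisj
  · exact absurd (dyadic_ssubset_iff.2 ⟨hlt, hsub'⟩) hsub
  · exact avg_eq_of_forall_mem fun x hx => haar_eq_zero_of_notMem (disjoint_left.1 hdisj hx)

lemma integral_haar_sq_mul (n k : ℤ) (g : ℝ → ℝ) :
    ∫ x, haar n k x ^ 2 * g x = avg g n k := by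
  simp_rw [haar_sq, ← indicator_mul_left]
  rw [integral_indicator (measurableSet_dyadic n k), integral_const_mul, avg]

lemma haar_mul_haar_of_le {q r : ℤ × ℤ} (hqr : q ≠ r) (hle : q.1 ≤ r.1) (x : ℝ) :
    haar q.1 q.2 x * haar r.1 r.2 x = avg (haar r.1 r.2) q.1 q.2 * haar q.1 q.2 x := by
  rcases dyadic_subset_or_disjoint hle q.2 r.2 with hsub | hdisj
  · have hlt : q.1 < r.1 := by
      refine hle.lt_of_ne fun heq => hqr (Prod.ext heq ?_)
      rw [← heq] at hsub
      exact eq_of_mem_dyadic (left_mem_dyadic _ _) (hsub (left_mem_dyadic _ _))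
    by_cases hx : x ∈ dyadic q.1 q.2
    · rw [avg_eq_of_forall_mem fun y hy => haar_eq_of_mem_dyadic hlt hy hx, mul_comm]
    · rw [haar_eq_zero_of_notMem hx, zero_mul, mul_zero]
  · have hzero : ∀ y ∈ dyadic q.1 q.2, haar r.1 r.2 y = 0 :=
      fun y hy => haar_eq_zero_of_notMem (disjoint_left.1 hdisj hy)
    by_cases hx : x ∈ dyadic q.1 q.2
    · rw [avg_eq_of_forall_mem hzero, hzero x hx, mul_zero, zero_mul]
    · rw [haar_eq_zero_of_notMem hx, zero_mul, mul_zero]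

lemma integral_haar_mul_haar (q r : ℤ × ℤ) :
    ∫ x, haar q.1 q.2 x * haar r.1 r.2 x = if q = r then 1 else 0 := by
  split_ifs with hqr
  · subst hqr
    simp_rw [← sq]
    simpa using (integral_haar_sq_mul q.1 q.2 fun _ => 1).trans
      (avg_eq_of_forall_mem (v := 1) fun _ _ => rfl)
  wlog hle : q.1 ≤ r.1 generalizing q r
  · simpa only [mul_comm] using this r q (Ne.symm hqr) (le_of_not_ge hle)
  simp_rw [haar_mul_haar_of_le hqr hle]
  rw [integral_const_mul, integral_haar, mul_zero]

lemma integral_haar_mul_haar_mul_haar (q r : ℤ × ℤ) (n k : ℤ) :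
    ∫ x, haar q.1 q.2 x * haar r.1 r.2 x * haar n k x =
      (if q = r then avg (haar n k) q.1 q.2 else 0) +
      (if q = (n, k) then avg (haar r.1 r.2) n k else 0) +
      (if r = (n, k) then avg (haar q.1 q.2) n k else 0) := by
  by_cases hqr : q = r
  · subst hqr
    rw [← integral_haar_sq_mul]
    by_cases hq : q = (n, k)
    · subst hq
      simp [sq, avg_haar_of_le]
    · simp [sq, hq]
  wlog hle : q.1 ≤ r.1 generalizing q r
  · have := this r q (Ne.symm hqr) (le_of_not_ge hle)
    simp only [mul_comm (haar r.1 r.2 _), hqr, Ne.symm hqr, if_false, zero_add] at this ⊢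
    rw [this, add_comm]
  simp_rw [haar_mul_haar_of_le hqr hle, mul_assoc]
  rw [integral_const_mul, if_neg hqr, zero_add]
  simp only [integral_haar_mul_haar q (n, k)]
  by_cases hq : q = (n, k)
  · subst hq
    simp [Ne.symm hqr]
  · by_cases hr : r = (n, k)
    · subst hr
      simp [hq, avg_haar_of_le hle]
    · simp [hq, hr]

lemma sum_mul_sum_mul_ite {ι R : Type*} [CommRing R] [DecidableEq ι] (s : Finset ι)
    (c A B : ι → R) {p : ι} (hp : p ∉ s → c p = 0) :
    ∑ q ∈ s, c q * ∑ r ∈ s, c r *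
        ((if q = r then A q else 0) + (if q = p then B r else 0) + (if r = p then B q else 0)) =
      ∑ q ∈ s, c q ^ 2 * A q + 2 * c p * ∑ q ∈ s, c q * B q := by
  have hdiag : ∀ q ∈ s, ∑ r ∈ s, c r * (if q = r then A q else 0) = c q * A q := fun q hq => by
    rw [Finset.sum_eq_single_of_mem q hq fun r _ hr => by simp [Ne.symm hr], if_pos rfl]
  have hleft : ∑ q ∈ s, c q * ∑ r ∈ s, c r * (if q = p then B r else 0) =
      c p * ∑ r ∈ s, c r * B r := by
    rw [Finset.sum_eq_single p (fun q _ hq => by simp [hq]) fun hps => by simp [hp hps]]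
    simp
  have hright : ∀ q, ∑ r ∈ s, c r * (if r = p then B q else 0) = c p * B q := fun q => by
    rw [Finset.sum_eq_single p (fun r _ hr => by simp [hr]) fun hps => by simp [hp hps],
      if_pos rfl]
  simp only [mul_add, Finset.sum_add_distrib, hleft, hright]
  have hcross : ∑ q ∈ s, c q * (c p * B q) = c p * ∑ q ∈ s, c q * B q := by
    rw [Finset.mul_sum]
    exact Finset.sum_congr rfl fun q _ => mul_left_comm _ _ _
  rw [Finset.sum_congr rfl fun q hq => by rw [hdiag q hq], hcross]
  simp only [sq, mul_assoc]
  ring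

lemma integral_finset_sum_const_mul {ι α : Type*} [MeasurableSpace α] {μ : Measure α}
    (s : Finset ι) (c : ι → ℝ) {φ : ι → α → ℝ} (hφ : ∀ i ∈ s, Integrable (φ i) μ) :
    ∫ x, ∑ i ∈ s, c i * φ i x ∂μ = ∑ i ∈ s, c i * ∫ x, φ i x ∂μ := by
  rw [integral_finsetSum s fun i hi => (hφ i hi).const_mul (c i)]
  simp_rw [integral_const_mul]

noncomputable def haarExpansion (c : ℤ × ℤ →₀ ℝ) (x : ℝ) : ℝ :=
  ∑ q ∈ c.support, c q * haar q.1 q.2 x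

lemma exists_eq_haarExpansion {f : ℝ → ℝ} (hf : f ∈ haarSpan) : ∃ c, f = haarExpansion c := by
  obtain ⟨c, rfl⟩ := Finsupp.mem_span_range_iff_exists_finsupp.1 hf
  exact ⟨c, funext fun x => by simp [haarExpansion, Finsupp.sum]⟩

lemma innH_haarExpansion (c : ℤ × ℤ →₀ ℝ) (p : ℤ × ℤ) :
    innH (haarExpansion c) p.1 p.2 = c p := by
  simp_rw [innH, haarExpansion, Finset.sum_mul, mul_assoc]
  rw [integral_finset_sum_const_mul]
  · simp only [integral_haar_mul_haar, mul_ite, mul_one, mul_zero, Finset.sum_ite_eq']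
    exact ite_eq_left_iff.2 fun hp => (Finsupp.notMem_support_iff.1 hp).symm
  · exact fun q _ => integrable_mul_haar (measurable_haar q.1 q.2) (abs_haar_le q.1 q.2) p.1 p.2

lemma avg_haarExpansion (c : ℤ × ℤ →₀ ℝ) (n k : ℤ) :
    avg (haarExpansion c) n k = ∑ q ∈ c.support, c q * avg (haar q.1 q.2) n k := by
  simp_rw [avg, haarExpansion]
  rw [integral_finset_sum_const_mul _ _ fun q _ => (integrable_haar q.1 q.2).restrict,
    Finset.mul_sum]
  exact Finset.sum_congr rfl fun q _ => by ring

lemma integrable_haar_mul_haar_mul_haar (q r : ℤ × ℤ) (n k : ℤ) :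
    Integrable (fun x => haar q.1 q.2 x * haar r.1 r.2 x * haar n k x) :=
  integrable_mul_haar ((measurable_haar _ _).mul (measurable_haar _ _))
    (fun x => (abs_mul _ _).trans_le <| mul_le_mul (abs_haar_le _ _ x) (abs_haar_le _ _ x)
      (abs_nonneg _) (by positivity)) n k

lemma innH_sq_haarExpansion (c : ℤ × ℤ →₀ ℝ) (n k : ℤ) :
    innH (fun x => haarExpansion c x ^ 2) n k = ∑ q ∈ c.support, c q * ∑ r ∈ c.support, c r *
      ∫ x, haar q.1 q.2 x * haar r.1 r.2 x * haar n k x := by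
  have hexpand : ∀ x, haarExpansion c x ^ 2 * haar n k x = ∑ q ∈ c.support, c q *
      ∑ r ∈ c.support, c r * (haar q.1 q.2 x * haar r.1 r.2 x * haar n k x) := fun x => by
    rw [haarExpansion, sq, Finset.sum_mul_sum, Finset.sum_mul]
    refine Finset.sum_congr rfl fun q _ => ?_
    rw [Finset.sum_mul, Finset.mul_sum]
    exact Finset.sum_congr rfl fun r _ => by ring
  rw [innH, funext hexpand, integral_finset_sum_const_mul]
  · refine Finset.sum_congr rfl fun q _ => ?_
    rw [integral_finset_sum_const_mul _ _ fun r _ => integrable_haar_mul_haar_mul_haar q r n k]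
  · exact fun q _ => integrable_finsetSum _ fun r _ =>
      (integrable_haar_mul_haar_mul_haar q r n k).const_mul (c r)

theorem haar_coeff_square (f : ℝ → ℝ) (hf : f ∈ haarSpan) (n k : ℤ) :
    innH (fun x => f x ^ 2) n k =
      (∑' p : ℤ × ℤ, if dyadic p.1 p.2 ⊂ dyadic n k then
        innH f p.1 p.2 ^ 2 * haarVal n k p.1 p.2 else 0)
      + 2 * innH f n k * avg f n k := by
  obtain ⟨c, rfl⟩ := exists_eq_haarExpansion hf
  have hterm : ∀ p : ℤ × ℤ, (if dyadic p.1 p.2 ⊂ dyadic n k then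
      innH (haarExpansion c) p.1 p.2 ^ 2 * haarVal n k p.1 p.2 else 0) =
      c p ^ 2 * avg (haar n k) p.1 p.2 := fun p => by
    rw [avg_haar_eq_ite, innH_haarExpansion, mul_ite, mul_zero]
  rw [tsum_congr hterm, tsum_eq_sum fun p hp => by rw [Finsupp.notMem_support_iff.1 hp]; ring,
    innH_sq_haarExpansion, innH_haarExpansion c (n, k), avg_haarExpansion]
  simp_rw [integral_haar_mul_haar_mul_haar]
  exact sum_mul_sum_mul_ite _ _ _ _ fun hp => Finsupp.notMem_support_iff.1 hp
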